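/- The per-decision importance sampling estimator is unbiased: in a finite MDP with fixed horizon T, E_{τ∼π_b}[ Σ_{t'=1}^T R(s_{t'},a_{t'}) Π_{t=1}^{t'} ρ_t(τ) ] = E_{τ∼π_e}[ Σ_{t'=1}^T R(s_{t'},a_{t'}) ]. -/

import Mathlib

/-!
Peel off the first transition: a trajectory of length `T + 1` is a first state `x`, a first
action `b` and a trajectory of length `T` started from the distribution `P x b`. The
per-decision weighted return then factors as `ρ₀ (R x b + weighted return of the tail)`, and
`πb x b * ρ₀ = πe x b` turns the behaviour-policy weight of the first action into the
evaluation-policy one. The remaining tail expectations agree by induction, once one knows that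
the trajectory law of any policy has the same total mass as its initial measure.
-/

open Finset

/-- The joint probability of a length-`T` trajectory under policy `π`. -/
def trajProb {S A : Type*} (init : S → ℝ) (P : S → A → S → ℝ) (π : S → A → ℝ)
    (T : ℕ) (s : Fin (T + 1) → S) (a : Fin T → A) : ℝ :=
  init (s 0) * ∏ t : Fin T, π (s t.castSucc) (a t) * P (s t.castSucc) (a t) (s t.succ)

theorem sum_pi_fin_succ {S M : Type*} [Fintype S] [AddCommMonoid M] {n : ℕ}
    (f : (Fin (n + 1) → S) → M) :
    ∑ s, f s = ∑ x, ∑ s : Fin n → S, f (Fin.cons x s) := by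
  rw [← (Fin.consEquiv fun _ => S).sum_comp, Fintype.sum_prod_type]
  rfl

section Trajectory

variable {S A : Type*}

def trajExpect [Fintype S] [Fintype A] (init : S → ℝ) (P : S → A → S → ℝ)
    (π : S → A → ℝ) (T : ℕ) (F : (Fin (T + 1) → S) → (Fin T → A) → ℝ) : ℝ :=
  ∑ s, ∑ a, trajProb init P π T s a * F s a

def trajReturn (R : S → A → ℝ) (T : ℕ) (s : Fin (T + 1) → S) (a : Fin T → A) : ℝ :=
  ∑ t', R (s t'.castSucc) (a t')

noncomputable def pdisReturn (πe πb R : S → A → ℝ) (T : ℕ) (s : Fin (T + 1) → S)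
    (a : Fin T → A) : ℝ :=
  ∑ t', R (s t'.castSucc) (a t') *
    ∏ t ∈ univ.filter (· ≤ t'), πe (s t.castSucc) (a t) / πb (s t.castSucc) (a t)

theorem trajProb_cons (init : S → ℝ) (P : S → A → S → ℝ) (π : S → A → ℝ) (T : ℕ)
    (x : S) (s : Fin (T + 1) → S) (b : A) (a : Fin T → A) :
    trajProb init P π (T + 1) (Fin.cons x s) (Fin.cons b a)
      = init x * π x b * trajProb (P x b) P π T s a := by
  simp only [trajProb, Fin.prod_univ_succ, Fin.castSucc_succ, Fin.cons_succ, Fin.castSucc_zero,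
    Fin.cons_zero]
  ring

theorem trajReturn_cons (R : S → A → ℝ) (T : ℕ) (x : S) (s : Fin (T + 1) → S) (b : A)
    (a : Fin T → A) :
    trajReturn R (T + 1) (Fin.cons x s) (Fin.cons b a) = R x b + trajReturn R T s a := by
  simp only [trajReturn, Fin.sum_univ_succ, Fin.castSucc_succ, Fin.cons_succ, Fin.castSucc_zero,
    Fin.cons_zero]

theorem pdisReturn_cons (πe πb R : S → A → ℝ) (T : ℕ) (x : S) (s : Fin (T + 1) → S) (b : A)
    (a : Fin T → A) :
    pdisReturn πe πb R (T + 1) (Fin.cons x s) (Fin.cons b a)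
      = πe x b / πb x b * (R x b + pdisReturn πe πb R T s a) := by
  simp only [pdisReturn, Fin.sum_univ_succ, prod_filter, Fin.prod_univ_succ, Fin.succ_le_succ_iff,
    Fin.le_zero_iff, Fin.succ_ne_zero, Fin.zero_le, Fin.castSucc_succ, Fin.cons_succ,
    Fin.castSucc_zero, Fin.cons_zero, if_true, if_false, prod_const_one, mul_one, mul_add,
    mul_sum]
  congr 1
  · ring
  · exact sum_congr rfl fun _ _ => by ring

variable [Fintype S] [Fintype A] (P : S → A → S → ℝ) (π : S → A → ℝ)

theorem trajExpect_succ (init : S → ℝ) (T : ℕ)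
    (F : (Fin (T + 2) → S) → (Fin (T + 1) → A) → ℝ) :
    trajExpect init P π (T + 1) F
      = ∑ x, ∑ b, init x * π x b *
          trajExpect (P x b) P π T fun s a => F (Fin.cons x s) (Fin.cons b a) := by
  rw [trajExpect, sum_pi_fin_succ]
  refine sum_congr rfl fun x _ => ?_
  rw [sum_comm, sum_pi_fin_succ]
  refine sum_congr rfl fun b _ => ?_
  rw [sum_comm]
  simp only [trajExpect, trajProb_cons, mul_sum, mul_assoc]

theorem trajExpect_add (init : S → ℝ) (T : ℕ) (F G : (Fin (T + 1) → S) → (Fin T → A) → ℝ) :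
    trajExpect init P π T (fun s a => F s a + G s a)
      = trajExpect init P π T F + trajExpect init P π T G := by
  simp only [trajExpect, mul_add, sum_add_distrib]

theorem trajExpect_const_mul (init : S → ℝ) (T : ℕ) (c : ℝ)
    (F : (Fin (T + 1) → S) → (Fin T → A) → ℝ) :
    trajExpect init P π T (fun s a => c * F s a) = c * trajExpect init P π T F := by
  simp only [trajExpect, mul_sum]
  exact sum_congr rfl fun _ _ => sum_congr rfl fun _ _ => by ring

variable {P π}

theorem trajExpect_const (hP : ∀ s a, ∑ s', P s a s' = 1) (hπ : ∀ s, ∑ a, π s a = 1)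
    (T : ℕ) (init : S → ℝ) (c : ℝ) :
    trajExpect init P π T (fun _ _ => c) = c * ∑ s, init s := by
  induction T generalizing init with
  | zero => simp [trajExpect, trajProb, sum_pi_fin_succ, mul_sum, mul_comm]
  | succ T ih =>
    simp only [trajExpect_succ, ih, hP, mul_one, mul_sum]
    refine sum_congr rfl fun x _ => ?_
    rw [← sum_mul, ← mul_sum, hπ]
    ring

theorem trajExpect_pdisReturn (hP : ∀ s a, ∑ s', P s a s' = 1) (R πe πb : S → A → ℝ)
    (hπe : ∀ s, ∑ a, πe s a = 1) (hπb_pos : ∀ s a, 0 < πb s a) (hπb : ∀ s, ∑ a, πb s a = 1)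
    (T : ℕ) (init : S → ℝ) :
    trajExpect init P πb T (pdisReturn πe πb R T) = trajExpect init P πe T (trajReturn R T) := by
  induction T generalizing init with
  | zero => simp [trajExpect, pdisReturn, trajReturn]
  | succ T ih =>
    simp only [trajExpect_succ, pdisReturn_cons, trajReturn_cons, trajExpect_const_mul,
      trajExpect_add, trajExpect_const hP hπb, trajExpect_const hP hπe, ih]
    refine sum_congr rfl fun x _ => sum_congr rfl fun b _ => ?_
    have hρ : πb x b * (πe x b / πb x b) = πe x b := mul_div_cancel₀ _ (hπb_pos x b).ne'
    linear_combination
      init x * (R x b * ∑ s, P x b s + trajExpect (P x b) P πe T (trajReturn R T)) * hρ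

end Trajectory

theorem pdis_unbiased_general {S A : Type*} [Fintype S] [Fintype A] (T : ℕ)
    (init : S → ℝ)
    (P : S → A → S → ℝ) (hP1 : ∀ s a, ∑ s', P s a s' = 1)
    (R : S → A → ℝ)
    (πe πb : S → A → ℝ)
    (hπe1 : ∀ s, ∑ a, πe s a = 1)
    (hπb0 : ∀ s a, 0 < πb s a) (hπb1 : ∀ s, ∑ a, πb s a = 1) :
    ∑ s : Fin (T + 1) → S, ∑ a : Fin T → A,
        trajProb init P πb T s a *
          ∑ t' : Fin T, R (s t'.castSucc) (a t') *
            ∏ t ∈ Finset.univ.filter (· ≤ t'),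
              πe (s t.castSucc) (a t) / πb (s t.castSucc) (a t)
      = ∑ s : Fin (T + 1) → S, ∑ a : Fin T → A,
          trajProb init P πe T s a * ∑ t' : Fin T, R (s t'.castSucc) (a t') :=
  trajExpect_pdisReturn hP1 R πe πb hπe1 hπb0 hπb1 T init

/-- Unbiasedness of per-decision importance sampling (PDIS):
`E_{τ∼π_b}[Σ_{t'} R(s_{t'},a_{t'}) ∏_{t ≤ t'} ρ_t(τ)] = E_{τ∼π_e}[Σ_{t'} R(s_{t'},a_{t'})]`. -/
theorem pdis_unbiased {S A : Type*} [Fintype S] [Fintype A]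
    [Nonempty S] [Nonempty A] (T : ℕ)
    (init : S → ℝ) (hinit0 : ∀ s, 0 ≤ init s) (hinit1 : ∑ s, init s = 1)
    (P : S → A → S → ℝ) (hP0 : ∀ s a s', 0 ≤ P s a s') (hP1 : ∀ s a, ∑ s', P s a s' = 1)
    (R : S → A → ℝ)
    (πe πb : S → A → ℝ)
    (hπe0 : ∀ s a, 0 ≤ πe s a) (hπe1 : ∀ s, ∑ a, πe s a = 1)
    (hπb0 : ∀ s a, 0 < πb s a) (hπb1 : ∀ s, ∑ a, πb s a = 1) :
    ∑ s : Fin (T + 1) → S, ∑ a : Fin T → A,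
        trajProb init P πb T s a *
          ∑ t' : Fin T, R (s t'.castSucc) (a t') *
            ∏ t ∈ Finset.univ.filter (· ≤ t'),
              πe (s t.castSucc) (a t) / πb (s t.castSucc) (a t)
      = ∑ s : Fin (T + 1) → S, ∑ a : Fin T → A,
          trajProb init P πe T s a * ∑ t' : Fin T, R (s t'.castSucc) (a t') :=
  pdis_unbiased_general T init P hP1 R πe πb hπe1 hπb0 hπb1
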